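/- arXiv:1812.07137 — 2 statements merged into one kernel-verified Lean document; each statement's English description precedes it below -/
import Mathlib

section
/- For pairwise distinct complex numbers l₁, l₂, l₃: Σᵢ (lᵢ + 2)² ∏_{j≠i} (1 − 1/(lᵢ − lⱼ)) = (l₁² + l₂² + l₃²) + 2(l₁ + l₂ + l₃) + 1. -/
theorem stmt13 (l₁ l₂ l₃ : ℂ) (h12 : l₁ ≠ l₂) (h13 : l₁ ≠ l₃) (h23 : l₂ ≠ l₃) :
    (l₁ + 2)^2 * ((1 - 1/(l₁ - l₂)) * (1 - 1/(l₁ - l₃)))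
      + (l₂ + 2)^2 * ((1 - 1/(l₂ - l₁)) * (1 - 1/(l₂ - l₃)))
      + (l₃ + 2)^2 * ((1 - 1/(l₃ - l₁)) * (1 - 1/(l₃ - l₂)))
      = (l₁^2 + l₂^2 + l₃^2) + 2*(l₁ + l₂ + l₃) + 1 := by
  have a : l₁ - l₂ ≠ 0 := sub_ne_zero.mpr h12
  have b : l₁ - l₃ ≠ 0 := sub_ne_zero.mpr h13
  have c : l₂ - l₃ ≠ 0 := sub_ne_zero.mpr h23
  have a' : l₂ - l₁ ≠ 0 := sub_ne_zero.mpr h12.symm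
  have b' : l₃ - l₁ ≠ 0 := sub_ne_zero.mpr h13.symm
  have c' : l₃ - l₂ ≠ 0 := sub_ne_zero.mpr h23.symm
  field_simp
  ring
end

section
/- Let m ≥ 1 and let l₁, …, l_m be pairwise distinct complex numbers. Then Σ_{i=1}^{m} (lᵢ + m − 1) ∏_{j≠i} (1 − 1/(lᵢ − lⱼ)) = Σ_{i=1}^{m} lᵢ + m(m−1)/2. -/
/-!
Expanding each product `∏ⱼ (1 - 1/(lᵢ - lⱼ))` over subsets and regrouping the terms by
`T = {i} ∪ t`, the sum becomes `∑_T (-1)^(|T|-1) ∑_{i ∈ T} (lᵢ + c) / ∏_{j ∈ T, j ≠ i} (lᵢ - lⱼ)`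
with `c = m - 1`. By Lagrange interpolation the inner sum is the coefficient of `x^(|T|-1)` in
`x + c`, so only `|T| = 1` (giving `∑ lᵢ + m c`) and `|T| = 2` (giving `-1` each, `-C(m,2)` in
total) contribute.
-/

open Finset Polynomial

namespace Finset

variable {ι : Type*}

theorem sum_powersetCard_one_sum {M : Type*} [AddCommMonoid M] (s : Finset ι) (g : ι → M) :
    ∑ T ∈ s.powersetCard 1, ∑ i ∈ T, g i = ∑ i ∈ s, g i := by
  simp [powersetCard_one]

variable [DecidableEq ι]

theorem sum_sum_powerset_erase {M : Type*} [AddCommMonoid M] (s : Finset ι)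
    (f : ι → Finset ι → M) :
    ∑ i ∈ s, ∑ t ∈ (s.erase i).powerset, f i t = ∑ T ∈ s.powerset, ∑ i ∈ T, f i (T.erase i) := by
  rw [sum_comm' (t' := s) (s' := fun i => {T ∈ s.powerset | i ∈ T})
    (fun T i => by simp only [mem_powerset, mem_filter]; grind)]
  refine sum_congr rfl fun i hi => ?_
  have hi_notMem {t : Finset ι} (ht : t ⊆ s.erase i) : i ∉ t := fun h => notMem_erase i s (ht h)
  refine sum_nbij' (insert i) (erase · i) ?_ ?_ ?_ ?_ ?_ <;> simp only [mem_powerset, mem_filter]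
  · exact fun t ht => ⟨insert_subset hi (ht.trans (erase_subset i s)), mem_insert_self i t⟩
  · exact fun T hT => erase_subset_erase i hT.1
  · exact fun t ht => erase_insert (hi_notMem ht)
  · exact fun T hT => insert_erase hT.2
  · exact fun t ht => by rw [erase_insert (hi_notMem ht)]

theorem sum_mul_prod_erase_one_add {R : Type*} [CommSemiring R] (s : Finset ι) (g : ι → R)
    (x : ι → ι → R) :
    ∑ i ∈ s, g i * ∏ j ∈ s.erase i, (1 + x i j)
      = ∑ T ∈ s.powerset, ∑ i ∈ T, g i * ∏ j ∈ T.erase i, x i j := by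
  simp_rw [prod_one_add, mul_sum]
  exact sum_sum_powerset_erase s fun i t => g i * ∏ j ∈ t, x i j

end Finset

namespace Lagrange

variable {F ι : Type*} [Field F] [DecidableEq ι] {s : Finset ι} {v : ι → F}

theorem sum_add_div_prod_sub (hvs : Set.InjOn v s) (c : F) (hs : 2 ≤ #s) :
    ∑ i ∈ s, (v i + c) / ∏ j ∈ s.erase i, (v i - v j) = if #s = 2 then 1 else 0 := by
  have hdeg : (X + C c).degree < (#s : WithBot ℕ) := by
    rw [degree_X_add_C]
    exact_mod_cast hs
  have h := coeff_eq_sum hvs hdeg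
  simp only [eval_add, eval_X, eval_C] at h
  rw [← h, coeff_add, coeff_C, if_neg (show #s - 1 ≠ 0 by omega), add_zero, coeff_X]
  grind

theorem sum_mul_prod_neg_inv_sub (hvs : Set.InjOn v s) (c : F) :
    ∑ i ∈ s, (v i + c) * ∏ j ∈ s.erase i, -(v i - v j)⁻¹
      = (if #s = 1 then ∑ i ∈ s, (v i + c) else 0) - if #s = 2 then 1 else 0 := by
  rcases Nat.lt_or_ge #s 2 with hs | hs
  · interval_cases h : #s
    · simp [card_eq_zero.mp h]
    · obtain ⟨a, rfl⟩ := card_eq_one.mp h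
      simp
  have hterm : ∀ i ∈ s, (v i + c) * ∏ j ∈ s.erase i, -(v i - v j)⁻¹
      = (-1) ^ (#s - 1) * ((v i + c) / ∏ j ∈ s.erase i, (v i - v j)) := by
    intro i hi
    rw [prod_neg, card_erase_of_mem hi, prod_inv_distrib, div_eq_mul_inv]
    ring
  rw [sum_congr rfl hterm, ← mul_sum, sum_add_div_prod_sub hvs c hs,
    if_neg (show #s ≠ 1 by omega), zero_sub]
  split_ifs with h2 <;> simp [h2]

end Lagrange

theorem stmt14_general (m : ℕ) (l : Fin m → ℂ) (hl : Function.Injective l) :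
    ∑ i : Fin m, (l i + (m : ℂ) - 1) * ∏ j ∈ Finset.univ.erase i, (1 - 1/(l i - l j))
      = (∑ i : Fin m, l i) + (m : ℂ) * ((m : ℂ) - 1) / 2 := by
  set c : ℂ := (m : ℂ) - 1
  calc ∑ i : Fin m, (l i + (m : ℂ) - 1) * ∏ j ∈ univ.erase i, (1 - 1/(l i - l j))
      = ∑ i : Fin m, (l i + c) * ∏ j ∈ univ.erase i, (1 + -(l i - l j)⁻¹) := by
        simp only [c, one_div, sub_eq_add_neg, add_assoc]
    _ = ∑ T ∈ (univ : Finset (Fin m)).powerset,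
          ((if #T = 1 then ∑ i ∈ T, (l i + c) else 0) - if #T = 2 then 1 else 0) := by
        rw [sum_mul_prod_erase_one_add]
        exact sum_congr rfl fun T _ => Lagrange.sum_mul_prod_neg_inv_sub hl.injOn c
    _ = ∑ i : Fin m, (l i + c) - (m.choose 2 : ℂ) := by
        simp only [sum_sub_distrib, ← sum_filter, ← powersetCard_eq_filter,
          sum_powersetCard_one_sum, sum_const, card_powersetCard, card_univ, Fintype.card_fin,
          nsmul_eq_mul, mul_one]
    _ = (∑ i : Fin m, l i) + (m : ℂ) * ((m : ℂ) - 1) / 2 := by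
        rw [Nat.cast_choose_two, sum_add_distrib, sum_const, card_univ, Fintype.card_fin,
          nsmul_eq_mul]
        ring

theorem stmt14 (m : ℕ) (hm : 1 ≤ m) (l : Fin m → ℂ) (hl : Function.Injective l) :
    ∑ i : Fin m, (l i + (m : ℂ) - 1) * ∏ j ∈ Finset.univ.erase i, (1 - 1/(l i - l j))
      = (∑ i : Fin m, l i) + (m : ℂ) * ((m : ℂ) - 1) / 2 :=
  stmt14_general m l hl
end
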